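/- arXiv:2206.08226 — 3 statements merged into one kernel-verified Lean document; each statement's English description precedes it below -/
import Mathlib

section
/- Let G be a finite group acting on a set S, χ : G → k^× a group homomorphism (char k = 0), f : kS → kS the linear map with f(x) = Σ_{g∈G} χ(g)(g·x) for x ∈ S. Let X̃ ⊆ S be a set of orbit representatives and X := {x ∈ X̃ : χ|_{G_x} ≡ 1}. Then f restricts to a linear isomorphism from the span of X onto the image f(kS), and f vanishes on X̃ \ X. -/
/-!
Reindexing the sum gives `χ g • f (g • s) = f s`, so on each orbit `f` is determined by its value
at the representative. If some `g ∈ G_x` has `χ g ≠ 1`, this identity with `g • x = x` forces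
`f x = 0`. Otherwise `f x` is supported in the orbit of `x` with `x`-coefficient `|G_x| ≠ 0`,
so reading off coefficients at representatives shows that `f` is injective on the span of `X`.
-/

open MulAction Finsupp

theorem MulAction.pairwiseDisjoint_orbit_of_existsUnique {G S : Type*} [Group G] [MulAction G S]
    {T : Set S} (hT : ∀ s : S, ∃! y, y ∈ T ∧ y ∈ orbit G s) : T.PairwiseDisjoint (orbit G) := by
  intro x hx y hy hxy
  refine Set.disjoint_left.mpr fun s hsx hsy => hxy ?_
  exact (hT s).unique ⟨hx, mem_orbit_symm.mpr hsx⟩ ⟨hy, mem_orbit_symm.mpr hsy⟩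

section

variable {k G S : Type*} [CommRing k] [Group G] [Fintype G] [MulAction G S] (χ : G →* kˣ)
  {f : (S →₀ k) →ₗ[k] (S →₀ k)}
  (hf : ∀ s : S, f (single s 1) = ∑ g : G, (χ g : k) • single (g • s) 1)
include hf

theorem character_smul_apply_single_smul (g : G) (s : S) :
    (χ g : k) • f (single (g • s) 1) = f (single s 1) := by
  rw [hf, hf, Finset.smul_sum]
  refine Fintype.sum_bijective (· * g) (Group.mulRight_bijective g) _ _ fun h => ?_
  rw [smul_smul, mul_smul h g s, map_mul, Units.val_mul, mul_comm]

theorem apply_single_apply_eq_zero_of_notMem_orbit {x s : S} (hs : s ∉ orbit G x) :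
    f (single x 1) s = 0 := by
  classical
  rw [hf, Finsupp.finsetSum_apply]
  refine Finset.sum_eq_zero fun g _ => ?_
  rw [Finsupp.smul_apply, single_apply, if_neg (fun h => hs ⟨g, h⟩), smul_zero]

theorem apply_single_apply_self {x : S} (hx : ∀ g ∈ stabilizer G x, χ g = 1) :
    f (single x 1) x = Nat.card (stabilizer G x) := by
  classical
  rw [hf, Finsupp.finsetSum_apply]
  have hterm (g : G) : ((χ g : k) • single (g • x) (1 : k)) x = if g • x = x then 1 else 0 := by
    rw [Finsupp.smul_apply, single_apply]
    split_ifs with h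
    · rw [hx g h, Units.val_one, smul_eq_mul, mul_one]
    · rw [smul_zero]
  simp only [hterm, Finset.sum_boole, Nat.card_eq_fintype_card, Fintype.card_subtype,
    mem_stabilizer_iff]

theorem apply_apply_eq_mul_of_pairwiseDisjoint {T : Set S} (hT : T.PairwiseDisjoint (orbit G))
    {v : S →₀ k} (hv : v ∈ supported k k T) {x : S} (hx : x ∈ T) :
    f v x = v x * f (single x 1) x := by
  have hsingle (y : S) (a : k) : f (single y a) = a • f (single y 1) := by
    rw [← map_smul, smul_single_one]
  conv_lhs => rw [← v.sum_single]
  rw [map_finsuppSum, Finsupp.sum_apply, Finsupp.sum_eq_single x, hsingle, Finsupp.smul_apply,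
    smul_eq_mul]
  · intro y hy hyx
    have hxy : x ∉ orbit G y := fun h =>
      Set.disjoint_left.mp (hT (hv (mem_support_iff.mpr hy)) hx hyx) h (mem_orbit_self x)
    rw [hsingle, Finsupp.smul_apply, apply_single_apply_eq_zero_of_notMem_orbit χ hf hxy,
      smul_zero]
  · intro _
    rw [single_zero, map_zero, Finsupp.zero_apply]

variable [IsDomain k]

theorem apply_single_eq_zero_of_mem_stabilizer {x : S} {g : G} (hg : g ∈ stabilizer G x)
    (hχ : χ g ≠ 1) : f (single x 1) = 0 := by
  have h := character_smul_apply_single_smul χ hf g x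
  rw [show g • x = x from hg] at h
  have h' : ((χ g : k) - 1) • f (single x 1) = 0 := by rw [sub_smul, one_smul, h, sub_self]
  exact (smul_eq_zero.mp h').resolve_left (sub_ne_zero.mpr (Units.val_eq_one.not.mpr hχ))

theorem range_eq_map_supported {T : Set S} (hT : ∀ s : S, ∃ y ∈ T, y ∈ orbit G s) :
    LinearMap.range f = (supported k k {x ∈ T | ∀ g ∈ stabilizer G x, χ g = 1}).map f := by
  refine le_antisymm ?_ LinearMap.map_le_range
  rw [LinearMap.range_eq_map, ← supported_univ, supported_eq_span_single, Submodule.map_span,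
    Submodule.span_le]
  rintro _ ⟨_, ⟨s, -, rfl⟩, rfl⟩
  obtain ⟨_, hyT, g, rfl⟩ := hT s
  rw [← character_smul_apply_single_smul χ hf g s]
  refine Submodule.smul_mem _ _ ?_
  by_cases hχ : ∀ h ∈ stabilizer G (g • s), χ h = 1
  · exact Submodule.mem_map_of_mem (single_mem_supported k 1 ⟨hyT, hχ⟩)
  · obtain ⟨h, hh, hne⟩ := not_forall₂.mp hχ
    rw [apply_single_eq_zero_of_mem_stabilizer χ hf hh hne]
    exact Submodule.zero_mem _

variable [CharZero k]

theorem disjoint_supported_ker {T : Set S} (hT : T.PairwiseDisjoint (orbit G))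
    (hχ : ∀ x ∈ T, ∀ g ∈ stabilizer G x, χ g = 1) :
    Disjoint (supported k k T) (LinearMap.ker f) := by
  refine LinearMap.disjoint_ker.mpr fun v hv hfv => Finsupp.ext fun x => ?_
  by_cases hx : x ∈ T
  · have h := apply_apply_eq_mul_of_pairwiseDisjoint χ hf hT hv hx
    rw [hfv, Finsupp.zero_apply, apply_single_apply_self χ hf (hχ x hx), eq_comm,
      mul_eq_zero] at h
    exact h.resolve_right (Nat.cast_ne_zero.mpr Nat.card_pos.ne')
  · exact notMem_support_iff.mp fun h => hx (hv h)

end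

/-- Let `G` be a finite group acting on a set `S`, `χ : G → kˣ` a group
homomorphism (char k = 0), and `f : kS → kS` the linear map with
`f(x) = ∑_{g ∈ G} χ(g)(g·x)` for `x ∈ S`. Let `X̃ ⊆ S` be a set of orbit representatives
and `X := {x ∈ X̃ : χ|_{G_x} ≡ 1}`. Then `f` restricts to a linear isomorphism from the
span of `X` onto the image `f(kS)`, and `f` vanishes on `X̃ \ X`. -/
theorem stmt_2 {k G S : Type*} [Field k] [CharZero k] [Group G] [Fintype G]
    [MulAction G S] (χ : G →* kˣ)
    (f : (S →₀ k) →ₗ[k] (S →₀ k))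
    (hf : ∀ s : S, f (Finsupp.single s 1) = ∑ g : G, (χ g : k) • Finsupp.single (g • s) 1)
    (Xt : Set S) (hXt : ∀ s : S, ∃! y, y ∈ Xt ∧ y ∈ MulAction.orbit G s)
    (X : Set S) (hX : X = {x ∈ Xt | ∀ g ∈ MulAction.stabilizer G x, χ g = 1}) :
    (∀ x ∈ Xt, x ∉ X → f (Finsupp.single x 1) = 0) ∧
    ∃ e : (Submodule.span k ((fun s => Finsupp.single s (1 : k)) '' X)) ≃ₗ[k]
        LinearMap.range f,
      ∀ v : Submodule.span k ((fun s => Finsupp.single s (1 : k)) '' X),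
        ((e v : S →₀ k)) = f (v : S →₀ k) := by
  subst hX
  refine ⟨fun x hx hxX => ?_, ?_⟩
  · obtain ⟨g, hg, hχ⟩ : ∃ g ∈ stabilizer G x, χ g ≠ 1 := by simpa [hx] using hxX
    exact apply_single_eq_zero_of_mem_stabilizer χ hf hg hχ
  have hinj : Set.InjOn f (supported k k {x ∈ Xt | ∀ g ∈ stabilizer G x, χ g = 1}) :=
    LinearMap.disjoint_ker_iff_injOn.mp <| disjoint_supported_ker χ hf
      ((pairwiseDisjoint_orbit_of_existsUnique hXt).subset (Set.sep_subset _ _)) fun _ hx => hx.2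
  rw [← supported_eq_span_single]
  refine ⟨(LinearEquiv.ofInjective (f.domRestrict _)
    fun a b h => Subtype.ext (hinj a.2 b.2 h)).trans (LinearEquiv.ofEq _ _ ?_), fun v => rfl⟩
  rw [LinearMap.range_domRestrict, range_eq_map_supported χ hf fun s => (hXt s).exists]
end

section
/- The formal power series identity det(1 − τA)^{-1} = exp(Σ_{k≥1} τ^k tr(A^k)/k) holds for any square matrix A over a commutative ℚ-algebra, as an identity of formal power series in τ. -/
/-!
Write `D = det(1 - τA)`, `S = ∑_{k ≥ 1} τ^k tr(A^k)/k` and `E = exp(S)`. Since `ℚ ⊆ R`, a power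
series is determined by its derivative and its constant term, and `DE` has constant term `1`.
By Jacobi's formula `D' = -tr(adj(1 - τA) A)`, and `adj(1 - τA) = D ∑_k τ^k A^k` because
`∑_k τ^k A^k` inverts `1 - τA`; hence `D' = -D ∑_k τ^k tr(A^{k+1}) = -D S'`. As `E` is `exp`
composed with `S`, the chain rule gives `E' = E S'`, so `(DE)' = 0`.
-/

open PowerSeries

/-- The exponential `exp(S)` of a power series `S` with zero constant term: for fixed `d`,
only the terms `S^j/j!` with `j ≤ d` contribute to the coefficient of `τ^d`. -/
noncomputable def expOf {R : Type*} [CommRing R] [Algebra ℚ R] (S : PowerSeries R) :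
    PowerSeries R :=
  PowerSeries.mk fun d =>
    ∑ j ∈ Finset.range (d + 1), ((j.factorial : ℚ)⁻¹) • (PowerSeries.coeff d (S ^ j))

open Matrix

namespace Derivation

theorem leibniz_prod {R A M : Type*} [CommSemiring R] [CommSemiring A] [AddCommMonoid M]
    [Algebra R A] [Module A M] [Module R M] (d : Derivation R A M) {ι : Type*} [DecidableEq ι]
    (s : Finset ι) (f : ι → A) :
    d (∏ i ∈ s, f i) = ∑ i ∈ s, (∏ j ∈ s.erase i, f j) • d (f i) := by
  induction s using Finset.induction_on with
  | empty => simp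
  | insert a s ha ih =>
    rw [Finset.prod_insert ha, leibniz, ih, Finset.sum_insert ha, Finset.erase_insert ha,
      Finset.smul_sum, add_comm]
    congr 1
    refine Finset.sum_congr rfl fun i hi => ?_
    rw [Finset.erase_insert_of_ne (ne_of_mem_of_not_mem hi ha).symm,
      Finset.prod_insert (fun h => ha (Finset.mem_of_mem_erase h)), smul_smul]

theorem map_det {R A : Type*} [CommRing R] [CommRing A] [Algebra R A] (d : Derivation R A A)
    {n : Type*} [DecidableEq n] [Fintype n] (M : Matrix n n A) :
    d M.det = trace (adjugate M * M.map d) := by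
  have prod_updateCol (σ : Equiv.Perm n) (i : n) :
      ∏ j, M.updateCol i (fun k => d (M k i)) (σ j) j
        = (∏ j ∈ Finset.univ.erase i, M (σ j) j) * d (M (σ i) i) := by
    rw [← Finset.prod_erase_mul _ _ (Finset.mem_univ i), updateCol_self]
    congr 1
    exact Finset.prod_congr rfl fun j hj => updateCol_ne (Finset.ne_of_mem_erase hj)
  calc d M.det
      = ∑ i, (M.updateCol i fun k => d (M k i)).det := by
        simp only [det_apply, map_sum, Units.smul_def, map_zsmul, leibniz_prod, smul_eq_mul,
          Finset.smul_sum, prod_updateCol]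
        exact Finset.sum_comm
    _ = trace (adjugate M * M.map d) := by
        simp only [← cramer_apply, cramer_eq_adjugate_mulVec, mulVec, dotProduct, trace, diag,
          mul_apply, map_apply]

end Derivation

namespace Matrix

variable {n R : Type*} [Fintype n] [DecidableEq n] [CommRing R]

noncomputable def geomSeries (A : Matrix n n R) : Matrix n n R⟦X⟧ :=
  of fun i j => mk fun k => (A ^ k) i j

theorem map_coeff_geomSeries (A : Matrix n n R) (k : ℕ) :
    A.geomSeries.map (coeff k) = A ^ k := by
  ext i j
  simp [geomSeries]

theorem map_coeff_map_C_mul_geomSeries (A : Matrix n n R) (k : ℕ) :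
    (A.map C * A.geomSeries).map (coeff k) = A ^ (k + 1) := by
  ext i j
  simp [mul_apply, coeff_C_mul, geomSeries, pow_succ']

theorem one_sub_X_smul_mul_geomSeries (A : Matrix n n R) :
    (1 - (X : R⟦X⟧) • A.map C) * A.geomSeries = 1 := by
  rw [sub_mul, one_mul, smul_mul]
  ext i j (_ | k)
  · by_cases h : i = j <;> simp [geomSeries, one_apply, h]
  · simp only [sub_apply, smul_apply, smul_eq_mul, map_sub, coeff_succ_X_mul]
    rw [← map_apply (f := coeff _), ← map_apply (f := coeff _), map_coeff_geomSeries,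
      map_coeff_map_C_mul_geomSeries, sub_self, one_apply]
    split_ifs <;> simp

theorem adjugate_one_sub_X_smul (A : Matrix n n R) :
    adjugate (1 - (X : R⟦X⟧) • A.map C) = det (1 - (X : R⟦X⟧) • A.map C) • A.geomSeries := by
  calc adjugate (1 - (X : R⟦X⟧) • A.map C)
      = adjugate (1 - (X : R⟦X⟧) • A.map C) * ((1 - (X : R⟦X⟧) • A.map C) * A.geomSeries) := by
        rw [one_sub_X_smul_mul_geomSeries, mul_one]
    _ = det (1 - (X : R⟦X⟧) • A.map C) • A.geomSeries := by
        rw [← Matrix.mul_assoc, adjugate_mul, smul_mul, one_mul]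

theorem trace_map_C_mul_geomSeries (A : Matrix n n R) :
    trace (A.map C * A.geomSeries) = mk fun k => trace (A ^ (k + 1)) := by
  ext k
  rw [coeff_mk, AddMonoidHom.map_trace, map_coeff_map_C_mul_geomSeries]

omit [Fintype n] in
theorem map_derivative_one_sub_X_smul (A : Matrix n n R) :
    (1 - (X : R⟦X⟧) • A.map C).map (d⁄dX R) = -A.map C := by
  ext i j : 1
  by_cases h : i = j <;> simp [h]

theorem derivative_det_one_sub_X_smul (A : Matrix n n R) :
    d⁄dX R (det (1 - (X : R⟦X⟧) • A.map C))
      = -(det (1 - (X : R⟦X⟧) • A.map C) * mk fun k => trace (A ^ (k + 1))) := by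
  rw [Derivation.map_det, adjugate_one_sub_X_smul, map_derivative_one_sub_X_smul, smul_mul,
    trace_smul, smul_eq_mul, mul_neg, trace_neg, trace_mul_comm, trace_map_C_mul_geomSeries,
    mul_neg]

theorem constantCoeff_det_one_sub_X_smul (A : Matrix n n R) :
    constantCoeff (det (1 - (X : R⟦X⟧) • A.map C)) = 1 := by
  have : (1 - (X : R⟦X⟧) • A.map C).map constantCoeff = 1 := by
    ext i j
    by_cases h : i = j <;> simp [one_apply, h]
  rw [RingHom.map_det, RingHom.mapMatrix_apply, this, det_one]

end Matrix

section ExpOf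

variable {R : Type*} [CommRing R] [Algebra ℚ R]

theorem constantCoeff_expOf (S : R⟦X⟧) : constantCoeff (expOf S) = 1 := by
  rw [← coeff_zero_eq_constantCoeff_apply, expOf, coeff_mk]
  simp

theorem expOf_eq_subst_exp {S : R⟦X⟧} (hS : constantCoeff S = 0) :
    expOf S = (exp R).subst S := by
  ext d
  rw [expOf, coeff_mk, coeff_subst' (HasSubst.of_constantCoeff_zero' hS),
    finsum_eq_sum_of_support_subset (s := Finset.range (d + 1))]
  · refine Finset.sum_congr rfl fun j _ => ?_
    rw [coeff_exp, algebraMap_smul, one_div]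
  · intro j hj
    by_contra hjd
    refine hj ?_
    dsimp only
    rw [X_pow_dvd_iff.mp (pow_dvd_pow_of_dvd (X_dvd_iff.mpr hS) j) d (by simpa using hjd),
      smul_zero]

theorem derivative_expOf {S : R⟦X⟧} (hS : constantCoeff S = 0) :
    d⁄dX R (expOf S) = expOf S * d⁄dX R S := by
  rw [expOf_eq_subst_exp hS, derivative_subst (HasSubst.of_constantCoeff_zero' hS),
    derivative_exp]

theorem derivative_mk_inv_smul (a : ℕ → R) :
    d⁄dX R (mk fun d => if d = 0 then 0 else ((d : ℚ)⁻¹) • a d) = mk fun k => a (k + 1) := by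
  ext k
  rw [coeff_derivative, coeff_mk, coeff_mk, if_neg k.succ_ne_zero, mul_comm, ← Nat.cast_succ,
    ← nsmul_eq_mul, ← Nat.cast_smul_eq_nsmul ℚ, smul_smul, mul_inv_cancel₀ (by positivity),
    one_smul]

end ExpOf

/-- For any square matrix `A` over a commutative `ℚ`-algebra `R`, the formal
power series identity `det(1 − τA)⁻¹ = exp(∑_{k ≥ 1} τ^k tr(A^k)/k)` holds, i.e.
`det(1 − τA) · exp(∑_{k ≥ 1} τ^k tr(A^k)/k) = 1`. -/
theorem stmt_10 {R : Type*} [CommRing R] [Algebra ℚ R] {N : ℕ}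
    (A : Matrix (Fin N) (Fin N) R) :
    Matrix.det (1 - (PowerSeries.X : PowerSeries R) • A.map (PowerSeries.C (R := R))) *
      expOf (PowerSeries.mk fun d =>
        if d = 0 then 0 else ((d : ℚ)⁻¹) • Matrix.trace (A ^ d)) = 1 := by
  have hS : constantCoeff (mk fun d => if d = 0 then 0 else ((d : ℚ)⁻¹) • trace (A ^ d)) = 0 := by
    rw [← coeff_zero_eq_constantCoeff_apply, coeff_mk, if_pos rfl]
  have : IsAddTorsionFree R := .of_module_rat R
  refine derivative.ext ?_ ?_
  · rw [Derivation.leibniz, derivative_expOf hS, derivative_mk_inv_smul,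
      derivative_det_one_sub_X_smul, Derivation.map_one_eq_zero, smul_eq_mul, smul_eq_mul]
    ring
  · rw [map_mul, constantCoeff_det_one_sub_X_smul, constantCoeff_expOf, map_one, mul_one]
end

section
/- Let ρ ∈ {±1} and let coefficients α_{M,λ} ∈ k (for M ≥ 0 and λ a partition with all parts even, with (−1)^M = ρ), finitely many nonzero, satisfy the recursion 2·m_λ(λ_j)·λ_j·α_{M,λ} = −2ρ·α_{M+λ_j, λ−λ_j} for every M, every such λ, and every part λ_j of λ (where λ−λ_j removes one copy of the part λ_j). Then for every M, λ: α_{M,λ} = ((−ρ)^{#λ}/(λ_1⋯λ_{#λ}·∏_j m_λ(j)!)) · α_{M+|λ|, ∅}. -/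
/-!
Removing one copy of a part `j` from `λ` via the recursion multiplies `α` by `-ρ / (m_λ(j) j)`, and
the closed-form weight obeys the same rule because `m_λ(j) · (m_λ(j) - 1)! = m_λ(j)!`. Since every
part is even, the parity condition `(-1)^M = ρ` survives the shift `M ↦ M + j`, so induction on `λ`
reduces everything to `λ = ∅`.
-/

open Multiset Nat

theorem prod_factorial_count_cons {α : Type*} [DecidableEq α] (j : α) (t : Multiset α) :
    ∏ i ∈ (j ::ₘ t).toFinset, ((j ::ₘ t).count i)! =
      (j ::ₘ t).count j * ∏ i ∈ t.toFinset, (t.count i)! := by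
  have hpoint :
      ∀ i, ((j ::ₘ t).count i)! = (if j = i then t.count j + 1 else 1) * (t.count i)! := by
    intro i
    by_cases h : j = i
    · subst h; simp [count_cons_self, factorial_succ]
    · simp [h, count_cons_of_ne (Ne.symm h)]
  have hdrop : ∏ i ∈ insert j t.toFinset, (t.count i)! = ∏ i ∈ t.toFinset, (t.count i)! :=
    Finset.prod_insert_of_eq_one_if_notMem fun hj => by
      rw [count_eq_zero_of_notMem (mt mem_toFinset.2 hj), factorial_zero]
  simp only [hpoint, toFinset_cons, Finset.prod_mul_distrib, Finset.prod_ite_eq,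
    Finset.mem_insert_self, if_true, hdrop, count_cons_self]

section Weight

variable {k : Type*} [Field k]

def partitionWeight (ρ : k) (l : Multiset ℕ) : k :=
  (-ρ) ^ card l / ((l.map (fun j : ℕ => (j : k))).prod * ∏ j ∈ l.toFinset, ((l.count j)! : k))

theorem partitionWeight_zero (ρ : k) : partitionWeight ρ 0 = 1 := by
  simp [partitionWeight]

theorem partitionWeight_cons (ρ : k) (j : ℕ) (t : Multiset ℕ) :
    partitionWeight ρ (j ::ₘ t) = -ρ / ((j ::ₘ t).count j * j) * partitionWeight ρ t := by
  have := congrArg (Nat.cast (R := k)) (prod_factorial_count_cons j t)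
  push_cast at this
  rw [partitionWeight, partitionWeight, this, card_cons, map_cons, prod_cons]
  ring

end Weight

theorem stmt_11_general {k : Type*} [Field k] [CharZero k] (ρ : k)
    (α : ℕ → Multiset ℕ → k)
    (hrec : ∀ (M : ℕ) (l : Multiset ℕ), (-1 : k) ^ M = ρ → (∀ j ∈ l, Even j ∧ 0 < j) →
      ∀ j ∈ l, 2 * (l.count j : k) * (j : k) * α M l = -(2 * ρ) * α (M + j) (l.erase j)) :
    ∀ (M : ℕ) (l : Multiset ℕ), (-1 : k) ^ M = ρ → (∀ j ∈ l, Even j ∧ 0 < j) →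
      α M l = ((-ρ) ^ (Multiset.card l) /
          ((l.map (fun j : ℕ => (j : k))).prod *
            ∏ j ∈ l.toFinset, ((l.count j).factorial : k))) *
        α (M + l.sum) 0 := by
  intro M l hM hl
  change α M l = partitionWeight ρ l * α (M + l.sum) 0
  induction l using Multiset.induction_on generalizing M with
  | empty => simp [partitionWeight_zero]
  | cons j t ih =>
    obtain ⟨hj_even, hj_pos⟩ := hl j (mem_cons_self j t)
    have hstep := hrec M _ hM hl j (mem_cons_self j t)
    rw [erase_cons_head] at hstep
    have hcj : ((j ::ₘ t).count j : k) * j ≠ 0 :=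
      mul_ne_zero (Nat.cast_ne_zero.2 (count_ne_zero.2 (mem_cons_self j t)))
        (Nat.cast_ne_zero.2 hj_pos.ne')
    have hM' : (-1 : k) ^ (M + j) = ρ := by rw [pow_add, hj_even.neg_one_pow, mul_one, hM]
    rw [partitionWeight_cons, sum_cons, ← add_assoc, mul_assoc, ← ih (M + j) hM'
      (fun i hi => hl i (mem_cons_of_mem hi)), div_mul_eq_mul_div, eq_div_iff hcj]
    linear_combination hstep / 2

/-- Let `ρ ∈ {±1}` and let coefficients `α_{M,λ} ∈ k` (for `M ≥ 0` and `λ` a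
partition with all parts even, with `(−1)^M = ρ`), finitely many nonzero, satisfy the
recursion `2·m_λ(λ_j)·λ_j·α_{M,λ} = −2ρ·α_{M+λ_j, λ−λ_j}` for every `M`, every such `λ`,
and every part `λ_j` of `λ`. Then
`α_{M,λ} = ((−ρ)^{#λ}/(λ_1⋯λ_{#λ}·∏_j m_λ(j)!)) · α_{M+|λ|, ∅}`.
Partitions with even parts are modelled as multisets of even positive integers. -/
theorem stmt_11 {k : Type*} [Field k] [CharZero k] (ρ : k) (hρ : ρ = 1 ∨ ρ = -1)
    (α : ℕ → Multiset ℕ → k)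
    (hfin : {p : ℕ × Multiset ℕ | α p.1 p.2 ≠ 0}.Finite)
    (hrec : ∀ (M : ℕ) (l : Multiset ℕ), (-1 : k) ^ M = ρ → (∀ j ∈ l, Even j ∧ 0 < j) →
      ∀ j ∈ l, 2 * (l.count j : k) * (j : k) * α M l = -(2 * ρ) * α (M + j) (l.erase j)) :
    ∀ (M : ℕ) (l : Multiset ℕ), (-1 : k) ^ M = ρ → (∀ j ∈ l, Even j ∧ 0 < j) →
      α M l = ((-ρ) ^ (Multiset.card l) /
          ((l.map (fun j : ℕ => (j : k))).prod *
            ∏ j ∈ l.toFinset, ((l.count j).factorial : k))) *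
        α (M + l.sum) 0 :=
  stmt_11_general ρ α hrec
end
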